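/- Let A2 ∈ ℂ^{n×n} and B2 ∈ ℂ^{n×m}, and let N_{0i} ∈ ℂ^{n×m}, D_{0i} ∈ ℂ^{m×m} (i = 0,…,ω) be coefficient families satisfying the anti-right factorization identity s·N_0^#(s) - A2·N_0(s) = B2·D_0(s) for all s ∈ ℂ, where N_0(s) := Σ_i N_{0i}s^i and N_0^#(s) := Σ_i N_{0i}^# s^i (similarly for D_0). Define N_+(s) := N_0(s), D_+(s) := D_0(s), N_-(s) := N_0(-s), D_-(s) := D_0(-s). Then for all s ∈ ℂ: s·N_+(s) - A2^#·N_+^#(s) = B2^#·D_+^#(s) and s·N_-(s) + A2^#·N_-^#(s) = -B2^#·D_-^#(s); that is, (N_+, D_+) and (N_-, D_-) satisfy the decoupled factorization equations of the antilinear system (i.e., the case A1 = 0, B1 = 0). -/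
import Mathlib


open Matrix Finset

/-- Entrywise complex conjugate of a complex matrix. -/
noncomputable def mconj {n m : Type*} (M : Matrix n m ℂ) : Matrix n m ℂ :=
  M.map (starRingEnd ℂ)

/-- Evaluation of the polynomial matrix with coefficients `N 0, …, N ω` at `s`. -/
noncomputable def polyEval {n m : Type*} (ω : ℕ) (N : ℕ → Matrix n m ℂ) (s : ℂ) :
    Matrix n m ℂ :=
  ∑ i ∈ range (ω + 1), s ^ i • N i

lemma mconj_mconj {n m : Type*} (M : Matrix n m ℂ) : mconj (mconj M) = M := by
  ext i j; simp [mconj]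

lemma mconj_mul {n m k : Type*} [Fintype m] (A : Matrix n m ℂ) (B : Matrix m k ℂ) :
    mconj (A * B) = mconj A * mconj B := by
  ext i j
  simp [mconj, Matrix.mul_apply, map_sum]

lemma mconj_sub {n m : Type*} (A B : Matrix n m ℂ) :
    mconj (A - B) = mconj A - mconj B := by
  ext i j; simp [mconj]

lemma mconj_smul {n m : Type*} (c : ℂ) (A : Matrix n m ℂ) :
    mconj (c • A) = (starRingEnd ℂ c) • mconj A := by
  ext i j; simp [mconj]

lemma mconj_polyEval {n m : Type*} (ω : ℕ) (N : ℕ → Matrix n m ℂ) (s : ℂ) :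
    mconj (polyEval ω N s) = polyEval ω (fun i => mconj (N i)) (starRingEnd ℂ s) := by
  ext i j
  simp [mconj, polyEval, Matrix.sum_apply, map_sum]

/-- from an anti-right factorization `s·N0^#(s) - A2·N0(s) = B2·D0(s)`,
the choices `N±(s) = N0(±s)`, `D±(s) = D0(±s)` satisfy the decoupled factorization
equations of the antilinear system. -/
theorem stmt_8 {n m : ℕ} (ω : ℕ)
    (A2 : Matrix (Fin n) (Fin n) ℂ) (B2 : Matrix (Fin n) (Fin m) ℂ)
    (N0 : ℕ → Matrix (Fin n) (Fin m) ℂ) (D0 : ℕ → Matrix (Fin m) (Fin m) ℂ)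
    (hfac : ∀ s : ℂ,
      s • polyEval ω (fun i => mconj (N0 i)) s - A2 * polyEval ω N0 s
        = B2 * polyEval ω D0 s) :
    (∀ s : ℂ,
      s • polyEval ω N0 s - mconj A2 * polyEval ω (fun i => mconj (N0 i)) s
        = mconj B2 * polyEval ω (fun i => mconj (D0 i)) s) ∧
    (∀ s : ℂ,
      s • polyEval ω N0 (-s) + mconj A2 * polyEval ω (fun i => mconj (N0 i)) (-s)
        = -(mconj B2 * polyEval ω (fun i => mconj (D0 i)) (-s))) := by
  have key : ∀ s : ℂ,
      s • polyEval ω N0 s - mconj A2 * polyEval ω (fun i => mconj (N0 i)) s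
        = mconj B2 * polyEval ω (fun i => mconj (D0 i)) s := by
    intro s
    have h := congrArg mconj (hfac (starRingEnd ℂ s))
    rw [mconj_sub, mconj_smul, mconj_mul, mconj_mul, mconj_polyEval, mconj_polyEval,
      mconj_polyEval] at h
    simpa [mconj_mconj, Complex.conj_conj] using h
  refine ⟨key, fun s => ?_⟩
  have h := key (-s)
  have := congrArg (fun M => (-1 : ℂ) • M) h
  simp only [smul_sub, smul_smul, neg_one_mul, neg_neg, neg_smul, one_smul] at this
  rw [sub_neg_eq_add] at this
  rw [this]
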